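/- arXiv:2401.04262 — 6 statements merged into one kernel-verified Lean document; each statement's English description precedes it below -/
import Mathlib

section
/- Strong shift equivalence of square nonnegative integer matrices implies shift equivalence: if A and B are square matrices with nonnegative integer entries that are strongly shift equivalent, then they are shift equivalent. -/
/-- Elementary shift equivalence of square nonnegative integer matrices. -/
def ElemShiftEquiv : (Σ n : ℕ, Matrix (Fin n) (Fin n) ℕ) →
    (Σ n : ℕ, Matrix (Fin n) (Fin n) ℕ) → Prop :=
  fun A B => ∃ (R : Matrix (Fin A.1) (Fin B.1) ℕ) (S : Matrix (Fin B.1) (Fin A.1) ℕ),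
    A.2 = R * S ∧ B.2 = S * R

/-- Strong shift equivalence: the equivalence relation generated by elementary shift
equivalence. -/
def StrongShiftEquiv : (Σ n : ℕ, Matrix (Fin n) (Fin n) ℕ) →
    (Σ n : ℕ, Matrix (Fin n) (Fin n) ℕ) → Prop :=
  Relation.EqvGen ElemShiftEquiv

/-- Shift equivalence (with some lag ℓ ≥ 1). -/
def ShiftEquiv : (Σ n : ℕ, Matrix (Fin n) (Fin n) ℕ) →
    (Σ n : ℕ, Matrix (Fin n) (Fin n) ℕ) → Prop :=
  fun A B => ∃ ℓ : ℕ, 1 ≤ ℓ ∧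
    ∃ (R : Matrix (Fin A.1) (Fin B.1) ℕ) (S : Matrix (Fin B.1) (Fin A.1) ℕ),
      A.2 * R = R * B.2 ∧ S * A.2 = B.2 * S ∧ R * S = A.2 ^ ℓ ∧ S * R = B.2 ^ ℓ

lemma intertwine_pow {n m : ℕ} (A : Matrix (Fin n) (Fin n) ℕ)
    (B : Matrix (Fin m) (Fin m) ℕ) (R : Matrix (Fin n) (Fin m) ℕ)
    (h : A * R = R * B) (k : ℕ) : A ^ k * R = R * B ^ k := by
  induction k with
  | zero => simp
  | succ k ih =>
    rw [pow_succ, pow_succ, Matrix.mul_assoc, h, ← Matrix.mul_assoc, ih, Matrix.mul_assoc]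

/-- Strong shift equivalence implies shift equivalence. -/
theorem stmt1 (A B : Σ n : ℕ, Matrix (Fin n) (Fin n) ℕ)
    (h : StrongShiftEquiv A B) : ShiftEquiv A B := by
  induction h with
  | rel A B hAB =>
    obtain ⟨R, S, hA, hB⟩ := hAB
    exact ⟨1, le_refl 1, R, S, by rw [hA, hB, Matrix.mul_assoc],
      by rw [hA, hB, Matrix.mul_assoc], by rw [hA, pow_one], by rw [hB, pow_one]⟩
  | refl A =>
    exact ⟨1, le_refl 1, A.2, 1, rfl,
      by rw [Matrix.mul_one, Matrix.one_mul], by rw [Matrix.mul_one, pow_one],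
      by rw [Matrix.one_mul, pow_one]⟩
  | symm A B _ ih =>
    obtain ⟨ℓ, hℓ, R, S, h1, h2, h3, h4⟩ := ih
    exact ⟨ℓ, hℓ, S, R, h2.symm, h1.symm, h4, h3⟩
  | trans A B C _ _ ih1 ih2 =>
    obtain ⟨ℓ₁, hℓ₁, R₁, S₁, h1, h2, h3, h4⟩ := ih1
    obtain ⟨ℓ₂, hℓ₂, R₂, S₂, g1, g2, g3, g4⟩ := ih2
    refine ⟨ℓ₁ + ℓ₂, le_trans hℓ₁ (Nat.le_add_right _ _), R₁ * R₂, S₂ * S₁, ?_, ?_, ?_, ?_⟩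
    · rw [← Matrix.mul_assoc, h1, Matrix.mul_assoc, g1, Matrix.mul_assoc]
    · rw [Matrix.mul_assoc, h2, ← Matrix.mul_assoc, g2, Matrix.mul_assoc]
    · have : R₁ * R₂ * (S₂ * S₁) = R₁ * (R₂ * S₂) * S₁ := by
        simp only [Matrix.mul_assoc]
      rw [this, g3, ← intertwine_pow A.2 B.2 R₁ h1, Matrix.mul_assoc, h3,
        ← pow_add, Nat.add_comm]
    · have : S₂ * S₁ * (R₁ * R₂) = S₂ * (S₁ * R₁) * R₂ := by
        simp only [Matrix.mul_assoc]
      rw [this, h4, Matrix.mul_assoc, intertwine_pow B.2 C.2 R₂ g1,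
        ← Matrix.mul_assoc, g4, ← pow_add, Nat.add_comm]
end

section
/- For n ≥ 2 and m ≥ 2, the ℤ/mℤ-graded Bowen–Franks module of the n-petal rose, namely the cokernel of I − τ_m·n acting on ℤ[τ_m] (the group ring of ℤ/mℤ), is isomorphic as an abelian group to ℤ/(n^m − 1)ℤ, with the class of 1 corresponding to [1] and with τ_m acting as multiplication by n^{m−1}. -/
open Polynomial

/-- The ideal `⟨x^m - 1, 1 - n·x⟩` of `ℤ[x]`, so that the quotient is
`ℤ[τ_m]/⟨1 - n·τ_m⟩`, the `ℤ/mℤ`-graded Bowen–Franks module of the `n`-petal rose. -/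
noncomputable def roseIdeal (n m : ℕ) : Ideal (Polynomial ℤ) :=
  Ideal.span {X ^ m - 1, 1 - C (n : ℤ) * X}

/-- `ℤ[τ_m]/⟨1 - n τ_m⟩ ≅ ℤ/(n^m - 1)ℤ` as abelian groups, sending the class of `1` to `[1]`,
with `τ_m` acting as multiplication by `n^(m-1)`. -/
theorem stmt6 (n m : ℕ) (hn : 2 ≤ n) (hm : 2 ≤ m) :
    ∃ e : (Polynomial ℤ ⧸ roseIdeal n m) ≃+ ZMod (n ^ m - 1),
      e 1 = 1 ∧
      ∀ r : Polynomial ℤ ⧸ roseIdeal n m,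
        e (Ideal.Quotient.mk (roseIdeal n m) X * r) =
          (n : ZMod (n ^ m - 1)) ^ (m - 1) * e r := by
  set N : ℕ := n ^ m - 1 with hN
  set I : Ideal (Polynomial ℤ) := roseIdeal n m with hI
  set q : Polynomial ℤ →+* (Polynomial ℤ ⧸ I) := Ideal.Quotient.mk I with hq
  obtain ⟨k, hk⟩ : ∃ k, m = k + 1 := ⟨m - 1, by omega⟩
  have hk1 : m - 1 = k := by omega
  have hnm : 1 ≤ n ^ m := Nat.one_le_pow _ _ (by omega)
  have hNcast : ((N : ℕ) : ℤ) = (n : ℤ) ^ m - 1 := by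
    push_cast [hN, hnm]; ring
  -- basic relations in the quotient
  have hXm : q (X ^ m) = 1 := by
    have : q (X ^ m - 1) = 0 := Ideal.Quotient.eq_zero_iff_mem.2
      (Ideal.subset_span (by simp))
    have := sub_eq_zero.mp (by simpa [map_sub] using this)
    simpa using this
  have hnX : q (C (n : ℤ)) * q X = 1 := by
    have : q (1 - C (n : ℤ) * X) = 0 := Ideal.Quotient.eq_zero_iff_mem.2
      (Ideal.subset_span (by simp))
    have := sub_eq_zero.mp (by simpa [map_sub] using this)
    simpa [map_mul] using this.symm
  have hnm1 : q (C (n : ℤ)) ^ m = 1 := by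
    calc q (C (n : ℤ)) ^ m = q (C (n : ℤ)) ^ m * q (X ^ m) := by rw [hXm, mul_one]
    _ = (q (C (n : ℤ)) * q X) ^ m := by rw [map_pow, mul_pow]
    _ = 1 := by rw [hnX, one_pow]
  -- the element c := n^(m-1)
  set c : ℤ := (n : ℤ) ^ (m - 1) with hc
  have hXc : q X = q (C c) := by
    have hXk : q X ^ m = 1 := by rw [← map_pow, hXm]
    have h1 : q (C (n : ℤ)) ^ k = q X := by
      calc q (C (n : ℤ)) ^ k = q (C (n : ℤ)) ^ k * q X ^ m := by rw [hXk, mul_one]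
      _ = (q (C (n : ℤ)) * q X) ^ k * q X := by rw [hk, pow_succ, mul_pow]; ring
      _ = q X := by rw [hnX, one_pow, one_mul]
    rw [← h1, hc, hk1, C_pow, map_pow]
  have hNzero : q (C ((n : ℤ) ^ m - 1)) = 0 := by
    simp only [map_sub, map_pow, map_one, hnm1, sub_self]
  -- forward map
  set f : Polynomial ℤ →+* ZMod N :=
    (Int.castRingHom (ZMod N)).comp (evalRingHom c) with hf
  have hNm : ((n : ZMod N) ^ m) = 1 := by
    have h0 : ((N : ℕ) : ZMod N) = 0 := ZMod.natCast_self N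
    have h2 : (((n : ℤ) ^ m - 1 : ℤ) : ZMod N) = 0 := by
      rw [← hNcast]; exact_mod_cast h0
    push_cast at h2
    linear_combination h2
  have hfI : ∀ p ∈ I, f p = 0 := by
    intro p hp
    have hle : I ≤ RingHom.ker f := by
      rw [hI, roseIdeal, Ideal.span_le]
      intro r hr
      simp only [Set.mem_insert_iff, Set.mem_singleton_iff] at hr
      simp only [SetLike.mem_coe, RingHom.mem_ker]
      rcases hr with rfl | rfl
      · show ((eval c (X ^ m - 1) : ℤ) : ZMod N) = 0
        simp only [eval_sub, eval_pow, eval_X, eval_one, hc]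
        push_cast
        rw [← pow_mul, Nat.mul_comm, pow_mul, hNm, one_pow, sub_self]
      · show ((eval c (1 - C (n : ℤ) * X) : ℤ) : ZMod N) = 0
        have hcn : (n : ℤ) * c = (n : ℤ) ^ m := by
          rw [hc, ← pow_succ']; congr 1; omega
        simp only [eval_sub, eval_mul, eval_one, eval_C, eval_X, hcn]
        push_cast
        rw [hNm, sub_self]
    exact hle hp
  set φ : (Polynomial ℤ ⧸ I) →+* ZMod N := Ideal.Quotient.lift I f hfI with hφ
  -- backward map
  have hNQ : ((N : ℤ) : Polynomial ℤ ⧸ I) = 0 := by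
    have : ((N : ℤ) : Polynomial ℤ ⧸ I) = q (C ((N : ℤ))) := by
      rw [← map_intCast q]; norm_cast
    rw [this, hNcast, hNzero]
  set g : ZMod N →+ (Polynomial ℤ ⧸ I) :=
    ZMod.lift N ⟨(Int.castRingHom (Polynomial ℤ ⧸ I)).toAddMonoidHom, hNQ⟩ with hg
  -- key: q p = q (C (eval c p))
  have hG : ∀ p : Polynomial ℤ, q p = ((eval c p : ℤ) : Polynomial ℤ ⧸ I) := by
    have : q = (Int.castRingHom (Polynomial ℤ ⧸ I)).comp (evalRingHom c) := by
      apply Polynomial.ringHom_ext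
      · intro a
        rw [eq_intCast C a, map_intCast, map_intCast]
      · rw [RingHom.comp_apply, coe_evalRingHom, eval_X, hXc, eq_intCast C c, map_intCast,
          eq_intCast]
    intro p
    rw [this]; rfl
  have left_inv : Function.LeftInverse g φ := by
    intro r
    obtain ⟨p, rfl⟩ := Ideal.Quotient.mk_surjective (I := I) r
    have h1 : φ (q p) = ((eval c p : ℤ) : ZMod N) := rfl
    rw [h1, hg]
    have := ZMod.lift_coe N ⟨(Int.castRingHom (Polynomial ℤ ⧸ I)).toAddMonoidHom, hNQ⟩
      (eval c p)
    rw [this]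
    exact (hG p).symm
  have right_inv : Function.RightInverse g φ := by
    intro x
    obtain ⟨z, rfl⟩ := ZMod.intCast_surjective x
    rw [hg, ZMod.lift_coe]
    simp only [RingHom.toAddMonoidHom_eq_coe, AddMonoidHom.coe_coe, eq_intCast, map_intCast]
  refine ⟨{ toFun := φ, invFun := g, left_inv := left_inv, right_inv := right_inv,
            map_add' := φ.map_add }, ?_, ?_⟩
  · simp only [AddEquiv.coe_mk, Equiv.coe_fn_mk]; exact φ.map_one
  · intro r
    show φ (q X * r) = _
    have hx : φ (q X) = (n : ZMod N) ^ (m - 1) := by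
      have h1 : φ (q X) = ((eval c X : ℤ) : ZMod N) := rfl
      rw [h1, eval_X, hc]; push_cast; rfl
    rw [map_mul, hx]; rfl
end

section
/- For n ≥ 2 and m ≥ 2, there is no ℤ[τ_m]-module homomorphism φ : ℤ[τ_m]/⟨ξ_n(τ_m)⟩ → ℤ/(n^m − 1)ℤ with φ([1 − n·τ_m]) = [1], where on the codomain τ_m acts as multiplication by n^{m−1} and ξ_n(x) = x³ + (2n−1)x² − (n+2)x + 1. -/
open Polynomial

/-- The ideal `⟨x^m - 1, ξ_n(x)⟩` of `ℤ[x]`, where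
`ξ_n(x) = x³ + (2n-1)x² - (n+2)x + 1`; the quotient is `ℤ[τ_m]/⟨ξ_n(τ_m)⟩`. -/
noncomputable def xiIdeal (n m : ℕ) : Ideal (Polynomial ℤ) :=
  Ideal.span {X ^ m - 1,
    X ^ 3 + C (2 * (n : ℤ) - 1) * X ^ 2 - C ((n : ℤ) + 2) * X + 1}

/-- There is no `ℤ[τ_m]`-module homomorphism `ℤ[τ_m]/⟨ξ_n(τ_m)⟩ → ℤ/(n^m-1)ℤ`
(where `τ_m` acts on the codomain by multiplication by `n^(m-1)`) sending
`[1 - n·τ_m]` to `[1]`. -/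
theorem stmt7 (n m : ℕ) (hn : 2 ≤ n) (hm : 2 ≤ m) :
    ¬ ∃ φ : (Polynomial ℤ ⧸ xiIdeal n m) →+ ZMod (n ^ m - 1),
      (∀ r : Polynomial ℤ ⧸ xiIdeal n m,
        φ (Ideal.Quotient.mk (xiIdeal n m) X * r) =
          (n : ZMod (n ^ m - 1)) ^ (m - 1) * φ r) ∧
      φ (Ideal.Quotient.mk (xiIdeal n m) (1 - C (n : ℤ) * X)) = 1 := by
  rintro ⟨φ, hX, h1⟩
  have hnm : 4 ≤ n ^ m := by
    calc (4 : ℕ) = 2 ^ 2 := by norm_num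
    _ ≤ 2 ^ m := Nat.pow_le_pow_right (by norm_num) hm
    _ ≤ n ^ m := Nat.pow_le_pow_left hn m
  haveI : Fact (1 < n ^ m - 1) := ⟨by omega⟩
  -- n^m = 1 in ZMod (n^m - 1)
  have hcast : ((n : ZMod (n ^ m - 1))) ^ m = 1 := by
    have h : n ^ m = (n ^ m - 1) + 1 := by omega
    have : ((n ^ m : ℕ) : ZMod (n ^ m - 1)) = 1 := by
      rw [h]; push_cast; simp
    simpa using this
  let mk := Ideal.Quotient.mk (xiIdeal n m)
  show False
  -- φ (mk X) = n^(m-1) * φ 1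
  have hφX : φ (mk X) = (n : ZMod (n ^ m - 1)) ^ (m - 1) * φ 1 := by
    have := hX 1
    simpa using this
  have hmk : mk (1 - C (n : ℤ) * X) = mk 1 - (n : ℤ) • mk X := by
    rw [map_sub]
    congr 1
    rw [← map_zsmul]
    congr 1
    rw [zsmul_eq_mul]
    simp [Polynomial.C_eq_intCast]
  have key : φ (mk (1 - C (n : ℤ) * X)) = 0 := by
    rw [hmk, map_sub, map_zsmul, hφX]
    have hpow : (n : ZMod (n ^ m - 1)) * (n : ZMod (n ^ m - 1)) ^ (m - 1) = 1 := by
      have : (n : ZMod (n ^ m - 1)) * (n : ZMod (n ^ m - 1)) ^ (m - 1)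
          = (n : ZMod (n ^ m - 1)) ^ m := by
        rw [← pow_succ']
        congr 1
        omega
      rw [this, hcast]
    have : ((n : ℤ) • ((n : ZMod (n ^ m - 1)) ^ (m - 1) * φ 1))
        = (n : ZMod (n ^ m - 1)) * ((n : ZMod (n ^ m - 1)) ^ (m - 1) * φ 1) := by
      rw [zsmul_eq_mul]; push_cast; ring
    rw [this, ← mul_assoc, hpow, one_mul]
    have hφ1 : φ (mk 1) = φ 1 := by norm_num
    rw [hφ1, sub_self]
  rw [h1] at key
  exact one_ne_zero key
end

section
/- For n ≥ 2, the groups ℤ[x,x⁻¹]/⟨ξ_n(x), x+1⟩ and ℤ[x,x⁻¹]/⟨1−nx, x+1⟩ are respectively isomorphic to ℤ/(3n+1)ℤ and ℤ/(n+1)ℤ; in particular, since 3n+1 ≠ n+1, they are not isomorphic as abelian groups. -/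
open LaurentPolynomial

noncomputable def ev : LaurentPolynomial ℤ →+* ℤ :=
  ((AddMonoidAlgebra.lift ℤ ℤ ℤ) ((Units.coeHom ℤ).comp ((zpowersHom ℤˣ) (-1)))).toRingHom

lemma ev_T (k : ℤ) : ev (T k) = ((-1:ℤˣ)^k : ℤˣ) := by
  show ((AddMonoidAlgebra.lift ℤ ℤ ℤ) _) (AddMonoidAlgebra.single k 1) = _
  rw [AddMonoidAlgebra.lift_single]
  simp [zpowersHom]

lemma ev_C (a : ℤ) : ev (C a) = a := by
  simp [ev]

lemma T_sub_mem (k : ℤ) :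
    T k - C (((-1:ℤˣ)^k : ℤˣ) : ℤ) ∈ Ideal.span {(T 1 + 1 : LaurentPolynomial ℤ)} := by
  induction k using Int.induction_on with
  | zero => simp
  | succ m ih =>
    have h1 : T ((m:ℤ)+1) - C (((-1:ℤˣ)^((m:ℤ)+1) : ℤˣ) : ℤ) =
        T 1 * (T (m:ℤ) - C (((-1:ℤˣ)^(m:ℤ) : ℤˣ) : ℤ))
          + C (((-1:ℤˣ)^(m:ℤ) : ℤˣ) : ℤ) * (T 1 + 1) := by
      rw [T_add, zpow_add_one]
      push_cast
      rw [mul_neg_one, map_neg]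
      ring
    rw [h1]
    exact add_mem (Ideal.mul_mem_left _ _ ih)
      (Ideal.mul_mem_left _ _ (Ideal.subset_span rfl))
  | pred m ih =>
    have h1 : T (-(m:ℤ)-1) - C (((-1:ℤˣ)^(-(m:ℤ)-1) : ℤˣ) : ℤ) =
        T (-1) * (T (-(m:ℤ)) - C (((-1:ℤˣ)^(-(m:ℤ)) : ℤˣ) : ℤ))
          + C (((-1:ℤˣ)^(-(m:ℤ)) : ℤˣ) : ℤ) * T (-1) * (T 1 + 1) := by
      have hT2 : T (-1 : ℤ) * T (1:ℤ) = (1 : LaurentPolynomial ℤ) := by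
        rw [← T_add]; simp
      have hT3 : T (-1:ℤ) * T (-(m:ℤ)) = (T (-(m:ℤ)-1) : LaurentPolynomial ℤ) := by
        rw [← T_add]; congr 1; ring
      rw [zpow_sub_one]
      have : (((-1:ℤˣ)^(-(m:ℤ)) * (-1:ℤˣ)⁻¹ : ℤˣ) : ℤ)
          = -(((-1:ℤˣ)^(-(m:ℤ)) : ℤˣ) : ℤ) := by simp
      rw [this, map_neg]
      linear_combination -hT3 - C (((-1:ℤˣ)^(-(m:ℤ)) : ℤˣ) : ℤ) * hT2
    rw [h1]
    exact add_mem (Ideal.mul_mem_left _ _ ih)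
      (Ideal.mul_mem_left _ _ (Ideal.subset_span rfl))

lemma sub_C_ev_mem (p : LaurentPolynomial ℤ) :
    p - C (ev p) ∈ Ideal.span {(T 1 + 1 : LaurentPolynomial ℤ)} := by
  induction p using LaurentPolynomial.induction_on' with
  | add p q hp hq =>
    have : p + q - C (ev (p + q)) = (p - C (ev p)) + (q - C (ev q)) := by
      rw [map_add, map_add]; ring
    rw [this]; exact add_mem hp hq
  | C_mul_T k a =>
    have : C a * T k - C (ev (C a * T k)) = C a * (T k - C (((-1:ℤˣ)^k : ℤˣ) : ℤ)) := by
      rw [map_mul, ev_C, ev_T, map_mul]; ring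
    rw [this]
    exact Ideal.mul_mem_left _ _ (T_sub_mem k)

noncomputable def ψ (m : ℕ) : LaurentPolynomial ℤ →+* ZMod m :=
  (Int.castRingHom (ZMod m)).comp ev

lemma ψ_surj (m : ℕ) : Function.Surjective (ψ m) := fun z => by
  obtain ⟨a, ha⟩ := ZMod.intCast_surjective (n := m) z
  exact ⟨C a, by simp [ψ, ev_C, ha]⟩

lemma ker_ψ (m : ℕ) : RingHom.ker (ψ m) =
    Ideal.span {(((m:ℤ) : LaurentPolynomial ℤ)), T 1 + 1} := by
  apply le_antisymm
  · intro p hp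
    rw [RingHom.mem_ker] at hp
    simp only [ψ, RingHom.comp_apply, Int.coe_castRingHom] at hp
    obtain ⟨c, hc⟩ := (ZMod.intCast_zmod_eq_zero_iff_dvd _ _).mp hp
    have hdecomp : p = ((m:ℤ) : LaurentPolynomial ℤ) * C c + (p - C (ev p)) := by
      rw [hc, map_mul, map_natCast]; push_cast; ring
    rw [hdecomp]
    refine add_mem (Ideal.mul_mem_right _ _ (Ideal.subset_span (by simp))) ?_
    exact Ideal.span_mono (Set.singleton_subset_iff.mpr (by simp)) (sub_C_ev_mem p)
  · rw [Ideal.span_le]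
    rintro x (rfl | rfl)
    · simp [RingHom.mem_ker, ψ, map_intCast]
    · simp [RingHom.mem_ker, ψ, ev_T, map_add]

noncomputable def quotEquiv (m : ℕ) :
    (LaurentPolynomial ℤ ⧸ Ideal.span {(((m:ℤ) : LaurentPolynomial ℤ)), T 1 + 1})
      ≃+* ZMod m :=
  (Ideal.quotEquivOfEq (ker_ψ m).symm).trans
    (RingHom.quotientKerEquivOfSurjective (ψ_surj m))

lemma span1 (n : ℕ) :
    (Ideal.span {T 1 ^ 3 + ((2 * (n : ℤ) - 1 : ℤ) : LaurentPolynomial ℤ) * T 1 ^ 2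
        - (((n : ℤ) + 2 : ℤ) : LaurentPolynomial ℤ) * T 1 + 1,
      T 1 + 1} : Ideal (LaurentPolynomial ℤ)) =
    Ideal.span {((((3 * n + 1 : ℕ):ℤ) : LaurentPolynomial ℤ)), T 1 + 1} := by
  apply le_antisymm <;> rw [Ideal.span_le] <;> rintro x (rfl | rfl)
  · rw [SetLike.mem_coe, Ideal.mem_span_pair]
    exact ⟨1, T 1 ^ 2 + (2 * (n : LaurentPolynomial ℤ) - 2) * T 1
      - 3 * (n : LaurentPolynomial ℤ), by push_cast; ring⟩
  · exact Ideal.subset_span (by simp)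
  · rw [SetLike.mem_coe, Ideal.mem_span_pair]
    exact ⟨1, -(T 1 ^ 2 + (2 * (n : LaurentPolynomial ℤ) - 2) * T 1
      - 3 * (n : LaurentPolynomial ℤ)), by push_cast; ring⟩
  · exact Ideal.subset_span (by simp)

lemma span2 (n : ℕ) :
    (Ideal.span {(1 : LaurentPolynomial ℤ) - (n : LaurentPolynomial ℤ) * T 1,
      T 1 + 1} : Ideal (LaurentPolynomial ℤ)) =
    Ideal.span {((((n + 1 : ℕ):ℤ) : LaurentPolynomial ℤ)), T 1 + 1} := by
  apply le_antisymm <;> rw [Ideal.span_le] <;> rintro x (rfl | rfl)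
  · rw [SetLike.mem_coe, Ideal.mem_span_pair]
    exact ⟨1, -(n : LaurentPolynomial ℤ), by push_cast; ring⟩
  · exact Ideal.subset_span (by simp)
  · rw [SetLike.mem_coe, Ideal.mem_span_pair]
    exact ⟨1, (n : LaurentPolynomial ℤ), by push_cast; ring⟩
  · exact Ideal.subset_span (by simp)

/-- `ℤ[x,x⁻¹]/⟨ξ_n(x), x+1⟩` where `ξ_n(x) = x³ + (2n-1)x² - (n+2)x + 1`. -/
abbrev Q1 (n : ℕ) : Type :=
  LaurentPolynomial ℤ ⧸
    (Ideal.span {T 1 ^ 3 + ((2 * (n : ℤ) - 1 : ℤ) : LaurentPolynomial ℤ) * T 1 ^ 2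
        - (((n : ℤ) + 2 : ℤ) : LaurentPolynomial ℤ) * T 1 + 1,
      T 1 + 1} : Ideal (LaurentPolynomial ℤ))

/-- `ℤ[x,x⁻¹]/⟨1 - nx, x+1⟩`. -/
abbrev Q2 (n : ℕ) : Type :=
  LaurentPolynomial ℤ ⧸
    (Ideal.span {(1 : LaurentPolynomial ℤ) - (n : LaurentPolynomial ℤ) * T 1,
      T 1 + 1} : Ideal (LaurentPolynomial ℤ))

/-- `ℤ[x,x⁻¹]/⟨ξ_n, x+1⟩ ≅ ℤ/(3n+1)ℤ` and `ℤ[x,x⁻¹]/⟨1-nx, x+1⟩ ≅ ℤ/(n+1)ℤ`;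
since `3n+1 ≠ n+1` they are not isomorphic as abelian groups. -/
theorem stmt8 (n : ℕ) (hn : 2 ≤ n) :
    Nonempty (Q1 n ≃+ ZMod (3 * n + 1)) ∧
    Nonempty (Q2 n ≃+ ZMod (n + 1)) ∧
    IsEmpty (Q1 n ≃+ Q2 n) := by
  have e1 : Q1 n ≃+ ZMod (3 * n + 1) :=
    (((Ideal.quotEquivOfEq (span1 n)).trans (quotEquiv (3 * n + 1)))).toAddEquiv
  have e2 : Q2 n ≃+ ZMod (n + 1) :=
    (((Ideal.quotEquivOfEq (span2 n)).trans (quotEquiv (n + 1)))).toAddEquiv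
  refine ⟨⟨e1⟩, ⟨e2⟩, ⟨fun e => ?_⟩⟩
  haveI : NeZero (3 * n + 1) := ⟨by omega⟩
  have hcard : (3 * n + 1) = (n + 1) := by
    have := Nat.card_congr ((e1.symm.trans e).trans e2).toEquiv
    simpa [Nat.card_zmod] using this
  omega
end

section
/- The ring ℤ[i√k] = ℤ[X]/(X² + k) viewed inside ℂ (for an integer k ≥ 2) is kind: for all n ≥ 2 and x₁,…,xₙ ∈ ℤ[i√k], if x₁ = Σ_{j=1}^n |x_j|², then x₂ = ⋯ = xₙ = 0. -/
/-- The subring `ℤ[i√k] = {a + b·i√k : a, b ∈ ℤ} ⊆ ℂ`. -/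
def Zik (k : ℕ) : Set ℂ :=
  {z | ∃ a b : ℤ, z = (a : ℂ) + (b : ℂ) * (Complex.I * (Real.sqrt k : ℂ))}

/-- For `k ≥ 2`, the ring `ℤ[i√k]` is kind: if `x₁ = Σ_{j=1}^n |xⱼ|²` with `n ≥ 2` and all
`xⱼ ∈ ℤ[i√k]`, then `x₂ = ⋯ = xₙ = 0`. -/
theorem stmt13 (k : ℕ) (hk : 2 ≤ k) (n : ℕ) (hn : 2 ≤ n) (x : ℕ → ℂ)
    (hx : ∀ j, 1 ≤ j → j ≤ n → x j ∈ Zik k)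
    (h : x 1 = ∑ j ∈ Finset.Icc 1 n, ((Complex.normSq (x j) : ℝ) : ℂ)) :
    ∀ j, 2 ≤ j → j ≤ n → x j = 0 := by
  obtain ⟨a, b, hab⟩ := hx 1 le_rfl (by omega)
  set S : ℝ := ∑ j ∈ Finset.Icc 1 n, Complex.normSq (x j) with hS
  have hsum : x 1 = (S : ℂ) := by rw [h]; rw [hS]; push_cast; ring
  have him : (x 1).im = 0 := by rw [hsum]; simp
  have hsk : (0:ℝ) < Real.sqrt k := Real.sqrt_pos.mpr (by positivity)
  rw [hab] at him
  simp [Complex.add_im, Complex.mul_im] at him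
  -- him should give b = 0 or √k = 0
  have hb0 : b = 0 := by
    rcases him with h' | h'
    · exact h'
    · omega
  subst hb0
  simp only [Int.cast_zero, zero_mul, add_zero] at hab
  -- x 1 = (a : ℂ)
  have hre : (a:ℝ) = S := by
    have := congrArg Complex.re hsum
    rw [hab] at this
    simpa using this
  have h1mem : 1 ∈ Finset.Icc 1 n := Finset.mem_Icc.mpr ⟨le_rfl, by omega⟩
  have hsplit : S = Complex.normSq (x 1) + ∑ j ∈ (Finset.Icc 1 n).erase 1, Complex.normSq (x j) := by
    rw [hS, ← Finset.add_sum_erase _ _ h1mem]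
  have hn1 : Complex.normSq (x 1) = (a:ℝ)^2 := by
    rw [hab]
    simp [Complex.normSq_apply]
    ring
  have hnonneg : (0:ℝ) ≤ ∑ j ∈ (Finset.Icc 1 n).erase 1, Complex.normSq (x j) :=
    Finset.sum_nonneg fun j _ => Complex.normSq_nonneg _
  have hale : (a:ℝ)^2 ≤ (a:ℝ) := by nlinarith [hre, hsplit, hn1]
  have haz : (a:ℝ) - (a:ℝ)^2 = 0 := by
    have : a^2 ≤ a := by exact_mod_cast hale
    have : a ≤ a^2 := by nlinarith
    have h2 : (a:ℝ) ≤ (a:ℝ)^2 := by exact_mod_cast this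
    linarith
  have hzero : ∑ j ∈ (Finset.Icc 1 n).erase 1, Complex.normSq (x j) = 0 := by
    nlinarith [hre, hsplit, hn1]
  intro j hj2 hjn
  have hjmem : j ∈ (Finset.Icc 1 n).erase 1 := by
    simp [Finset.mem_erase, Finset.mem_Icc]; omega
  have := (Finset.sum_eq_zero_iff_of_nonneg (fun j _ => Complex.normSq_nonneg (x j))).mp hzero j hjmem
  exact Complex.normSq_eq_zero.mp this
end

section
/- Let R be a simple unital ring that is purely infinite (i.e., not a division ring, and for every nonzero x ∈ R there exist a, b ∈ R with axb = 1). Then in the Leavitt algebra relations sense, R is properly infinite; concretely, there exist elements x₁, x₂, y₁, y₂ ∈ R with y_i x_j = δ_{ij}·1, i.e., there exist two isometries with orthogonal ranges: y₁x₁ = y₂x₂ = 1 and y₁x₂ = y₂x₁ = 0. -/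
/-- A simple purely infinite unital ring is properly infinite: it contains two isometries with
orthogonal ranges. -/
theorem stmt14 {R : Type*} [Ring R] [Nontrivial R]
    (hnd : ¬ ∀ x : R, x ≠ 0 → IsUnit x)
    (hspi : ∀ x : R, x ≠ 0 → ∃ a b : R, a * x * b = 1) :
    ∃ x₁ x₂ y₁ y₂ : R,
      y₁ * x₁ = 1 ∧ y₂ * x₂ = 1 ∧ y₁ * x₂ = 0 ∧ y₂ * x₁ = 0 := by
  by_cases H : ∀ u b : R, u * b = 1 → b * u = 1
  · exfalso
    apply hnd
    intro x hx
    obtain ⟨a, b, hab⟩ := hspi x hx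
    have hb : b * (a * x) = 1 := H _ _ hab
    have ha : (x * b) * a = 1 := H _ _ (by rw [← mul_assoc]; exact hab)
    exact ⟨⟨x, b * a, by rw [← mul_assoc]; exact ha, by rw [mul_assoc]; exact hb⟩, rfl⟩
  · push_neg at H
    obtain ⟨u, b, hub, hbu⟩ := H
    set p : R := 1 - b * u with hpdef
    have hp : p ≠ 0 := by
      intro h
      exact hbu (sub_eq_zero.mp h).symm
    have hup : u * p = 0 := by
      rw [hpdef, mul_sub, mul_one, ← mul_assoc, hub, one_mul, sub_self]
    have hpb : p * b = 0 := by
      rw [hpdef, sub_mul, one_mul, mul_assoc, hub, mul_one, sub_self]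
    have hpp : p * p = p := by
      calc p * p = p - b * (u * p) := by rw [hpdef]; noncomm_ring
        _ = p := by rw [hup, mul_zero, sub_zero]
    obtain ⟨a', b', h'⟩ := hspi p hp
    refine ⟨b, p * b', u, a' * p, hub, ?_, ?_, ?_⟩
    · calc a' * p * (p * b') = a' * (p * p) * b' := by noncomm_ring
        _ = 1 := by rw [hpp]; exact h'
    · rw [← mul_assoc, hup, zero_mul]
    · rw [mul_assoc, hpb, mul_zero]
end
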